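/- For all integers m ≥ 1, 1 ≤ i ≤ m, and n ≥ 1, the sum of X_{m,i}(λ) over all partitions λ of n equals Σ_{k=1}^{n} p(n−k) · Σ_{d | k} ⌊(d + m − i)/m⌋. -/

import Mathlib

/-- `p(n)`: the number of partitions of `n`. -/
noncomputable def partitionCount (n : ℕ) : ℕ := Fintype.card (Nat.Partition n)

/-- The parts of a partition, listed in weakly decreasing order
(so that the `j`-th entry, `1`-based, is `a_j`). -/
def sortedParts {n : ℕ} (lam : Nat.Partition n) : List ℕ :=
  lam.parts.sort (· ≥ ·)

/-- `X_{m,i}(λ)`: the sum of the parts of `λ` whose (1-based) index is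
congruent to `i` modulo `m`. -/
def X (m i : ℕ) {n : ℕ} (lam : Nat.Partition n) : ℕ :=
  ∑ j ∈ Finset.range (sortedParts lam).length,
    if (j + 1) % m = i % m then (sortedParts lam).getD j 0 else 0

/-!
Summing `a_j` over the indices `j ≡ i (mod m)` counts the cells of the Young diagram of `λ` that
lie in rows with index `≡ i`. Read off the transposed diagram, this is `∑ f(a)` over the parts `a`
of the conjugate partition `λ'`, where `f(a) = #{1 ≤ j ≤ a | j ≡ i} = ⌊(a + m - i) / m⌋`.
Conjugation permutes the partitions of `n`, so the total is `∑_λ ∑_{a ∈ λ} f(a)`. A part `r` occurs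
`∑_{s ≥ 1} p(n - r s)` times in all partitions of `n` together (remove one copy of `r` and
recurse), and putting `k = r s` turns the double sum into the divisor sum.
-/

open Finset

namespace YoungDiagram

variable {M : Type*} [AddCommMonoid M]

theorem mem_iff_lt_colLen_zero_and_lt_rowLen {μ : YoungDiagram} {i j : ℕ} :
    (i, j) ∈ μ ↔ i < μ.colLen 0 ∧ j < μ.rowLen i := by
  rw [← mem_iff_lt_colLen, ← mem_iff_lt_rowLen]
  exact ⟨fun h => ⟨μ.up_left_mem le_rfl (Nat.zero_le j) h, h⟩, And.right⟩

theorem sum_cells (μ : YoungDiagram) (f : ℕ × ℕ → M) :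
    ∑ c ∈ μ.cells, f c = ∑ i ∈ range (μ.colLen 0), ∑ j ∈ range (μ.rowLen i), f (i, j) :=
  sum_finset_product _ _ _ fun ⟨i, j⟩ => by
    simpa only [mem_cells, mem_range] using mem_iff_lt_colLen_zero_and_lt_rowLen

theorem sum_cells_transpose (μ : YoungDiagram) (f : ℕ × ℕ → M) :
    ∑ c ∈ μ.transpose.cells, f c = ∑ c ∈ μ.cells, f c.swap := by
  simp [transpose]

theorem sum_map_rowLens (μ : YoungDiagram) (g : ℕ → M) :
    (μ.rowLens.map g).sum = ∑ i ∈ range (μ.colLen 0), g (μ.rowLen i) := by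
  rw [rowLens, List.map_map]
  rfl

theorem rowLens_getD (μ : YoungDiagram) (i : ℕ) : μ.rowLens.getD i 0 = μ.rowLen i := by
  rw [List.getD_eq_getElem?_getD]
  by_cases h : i < μ.colLen 0
  · simp [rowLens, h]
  · have : μ.rowLen i = 0 := by
      rw [← mem_iff_lt_colLen, mem_iff_lt_rowLen] at h
      omega
    simp [rowLens, h, this]

theorem card_eq_sum_rowLens (μ : YoungDiagram) : μ.card = μ.rowLens.sum := by
  rw [YoungDiagram.card, card_eq_sum_ones, sum_cells, ← List.map_id' μ.rowLens, sum_map_rowLens]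
  simp

theorem card_transpose (μ : YoungDiagram) : μ.transpose.card = μ.card := by
  simp [YoungDiagram.card, transpose]

end YoungDiagram

theorem Finset.sum_range_div_eq_sum_filter_dvd {M : Type*} [AddCommMonoid M] (f : ℕ → M)
    {r : ℕ} (hr : 0 < r) (n : ℕ) :
    ∑ s ∈ range (n / r), f (r * (s + 1)) = ∑ k ∈ Icc 1 n with r ∣ k, f k := by
  rw [← sum_image fun _ _ _ _ h => by simpa [hr.ne'] using h]
  congr 1
  ext k
  simp only [mem_image, mem_range, mem_filter, mem_Icc]
  constructor
  · rintro ⟨s, hs, rfl⟩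
    have := (Nat.le_div_iff_mul_le hr).mp hs
    exact ⟨⟨Nat.mul_pos hr s.succ_pos, by linarith⟩, dvd_mul_right r _⟩
  · rintro ⟨⟨hk, hkn⟩, c, rfl⟩
    have hc : 0 < c := Nat.pos_of_mul_pos_left hk
    have : c ≤ n / r := (Nat.le_div_iff_mul_le hr).mpr (by rwa [mul_comm])
    exact ⟨c - 1, by omega, by rw [Nat.sub_add_cancel hc]⟩

theorem card_filter_range_add_one_mod_eq_div {m i : ℕ} (hi : 1 ≤ i) (him : i ≤ m) (a : ℕ) :
    #{j ∈ range a | (j + 1) % m = i % m} = (a + m - i) / m := by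
  induction a with
  | zero =>
    rw [range_zero, filter_empty, card_empty, zero_add, Nat.div_eq_of_lt (by omega)]
  | succ a ih =>
    have hdvd : (a + 1) % m = i % m ↔ m ∣ a + (m - i) + 1 := by
      change a + 1 ≡ i [MOD m] ↔ _
      have hm : i + (m - i) ≡ 0 [MOD m] := by
        rw [Nat.add_sub_cancel' him]
        exact Nat.modEq_zero_iff_dvd.mpr dvd_rfl
      rw [add_right_comm, ← Nat.modEq_zero_iff_dvd]
      exact ⟨fun h => (h.add_right _).trans hm,
        fun h => Nat.ModEq.add_right_cancel' (m - i) (h.trans hm.symm)⟩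
    rw [range_add_one, filter_insert, apply_ite card, card_insert_of_notMem (by simp), ih,
      show a + 1 + m - i = a + (m - i) + 1 by omega, Nat.succ_div,
      show a + m - i = a + (m - i) by omega]
    simp only [hdvd]
    split_ifs <;> rfl

namespace Nat.Partition

open YoungDiagram

variable {n : ℕ}

theorem sortedGE_sortedParts (lam : n.Partition) : (sortedParts lam).SortedGE :=
  (Multiset.pairwise_sort _ _).sortedGE

theorem coe_sortedParts (lam : n.Partition) : (sortedParts lam : Multiset ℕ) = lam.parts :=
  Multiset.sort_eq _ _

def toYoungDiagram (lam : n.Partition) : YoungDiagram :=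
  ofRowLens (sortedParts lam) lam.sortedGE_sortedParts

theorem rowLens_toYoungDiagram (lam : n.Partition) :
    lam.toYoungDiagram.rowLens = sortedParts lam :=
  rowLens_ofRowLens_eq_self fun _ h => lam.parts_pos ((Multiset.mem_sort _).mp h)

theorem card_toYoungDiagram (lam : n.Partition) : lam.toYoungDiagram.card = n := by
  rw [card_eq_sum_rowLens, rowLens_toYoungDiagram, ← Multiset.sum_coe, coe_sortedParts,
    lam.parts_sum]

def ofYoungDiagram (μ : YoungDiagram) (h : μ.card = n) : n.Partition where
  parts := μ.rowLens
  parts_pos := μ.pos_of_mem_rowLens _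
  parts_sum := by rw [Multiset.sum_coe, ← card_eq_sum_rowLens, h]

theorem toYoungDiagram_ofYoungDiagram (μ : YoungDiagram) (h : μ.card = n) :
    (ofYoungDiagram μ h).toYoungDiagram = μ := by
  have : sortedParts (ofYoungDiagram μ h) = μ.rowLens := by
    rw [sortedParts, ofYoungDiagram, Multiset.coe_sort,
      List.mergeSort_eq_self _ μ.rowLens_sorted.pairwise]
  simp only [toYoungDiagram, this]
  exact ofRowLens_to_rowLens_eq_self

def conjugate (lam : n.Partition) : n.Partition :=
  ofYoungDiagram lam.toYoungDiagram.transpose (by rw [card_transpose, card_toYoungDiagram])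

theorem conjugate_conjugate (lam : n.Partition) : lam.conjugate.conjugate = lam := by
  ext1
  change (lam.conjugate.toYoungDiagram.transpose.rowLens : Multiset ℕ) = lam.parts
  rw [conjugate, toYoungDiagram_ofYoungDiagram, transpose_transpose, rowLens_toYoungDiagram,
    coe_sortedParts]

theorem conjugate_involutive : Function.Involutive (conjugate : n.Partition → n.Partition) :=
  conjugate_conjugate

theorem sum_sortedParts_ite_eq_sum_conjugate (p : ℕ → Prop) [DecidablePred p]
    (lam : n.Partition) :
    ∑ j ∈ range (sortedParts lam).length, (if p j then (sortedParts lam).getD j 0 else 0) =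
      (lam.conjugate.parts.map fun a => #{j ∈ range a | p j}).sum := by
  set μ := lam.toYoungDiagram
  calc _ = ∑ c ∈ μ.cells, if p c.1 then 1 else 0 := by
        rw [← rowLens_toYoungDiagram, length_rowLens, sum_cells]
        refine sum_congr rfl fun j _ => ?_
        rw [rowLens_getD]
        split_ifs <;> simp [μ]
    _ = ∑ c ∈ μ.transpose.cells, if p c.2 then 1 else 0 :=
        (sum_cells_transpose μ fun c => if p c.2 then 1 else 0).symm
    _ = _ := by
        rw [sum_cells]
        simp_rw [← card_filter]
        exact (sum_map_rowLens μ.transpose fun a => #{j ∈ range a | p j}).symm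

theorem sum_count_eq_sum_count_sub_add {r : ℕ} (hr : 0 < r) (hrn : r ≤ n) :
    ∑ lam : n.Partition, lam.parts.count r =
      ∑ mu : (n - r).Partition, mu.parts.count r + partitionCount (n - r) := by
  let e := partitionWithPartEquiv hr hrn
  rw [← sum_filter_of_ne (p := fun lam : n.Partition => r ∈ lam.parts)
      fun _ _ h => Multiset.count_ne_zero.mp h,
    sum_subtype (p := fun lam : n.Partition => r ∈ lam.parts) _ fun _ => by simp,
    ← Fintype.sum_equiv e.symm (fun mu => mu.parts.count r + 1) _ fun mu => by
      simp [e, Multiset.count_cons_self],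
    sum_add_distrib, sum_const, Finset.card_univ, partitionCount, smul_eq_mul, mul_one]

theorem sum_count_eq_sum_range {r : ℕ} (hr : 0 < r) (n : ℕ) :
    ∑ lam : n.Partition, lam.parts.count r =
      ∑ s ∈ range (n / r), partitionCount (n - r * (s + 1)) := by
  induction n using Nat.strong_induction_on with
  | _ n ih =>
  rcases lt_or_ge n r with hnr | hrn
  · rw [Nat.div_eq_of_lt hnr, range_zero, sum_empty]
    exact sum_eq_zero fun lam _ =>
      Multiset.count_eq_zero.mpr fun h => (le_of_mem_parts h).not_gt hnr
  · rw [sum_count_eq_sum_count_sub_add hr hrn, ih (n - r) (by omega), Nat.div_eq_sub_div hr hrn,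
      sum_range_succ', zero_add, mul_one]
    congr 2 with s
    rw [Nat.sub_sub]
    ring_nf

theorem sum_sum_map_parts {M : Type*} [AddCommMonoid M] (g : ℕ → M) (n : ℕ) :
    ∑ lam : n.Partition, (lam.parts.map g).sum =
      ∑ k ∈ Icc 1 n, partitionCount (n - k) • ∑ d ∈ k.divisors, g d := by
  calc _ = ∑ lam : n.Partition, ∑ r ∈ Icc 1 n, lam.parts.count r • g r := by
        refine sum_congr rfl fun lam _ => ?_
        rw [sum_multiset_map_count]
        refine sum_subset (fun r hr => ?_) fun r _ hr => ?_
        · rw [Multiset.mem_toFinset] at hr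
          exact mem_Icc.mpr ⟨lam.parts_pos hr, le_of_mem_parts hr⟩
        · rw [Multiset.count_eq_zero_of_notMem (by simpa using hr), zero_smul]
    _ = ∑ r ∈ Icc 1 n, ∑ k ∈ Icc 1 n with r ∣ k, partitionCount (n - k) • g r := by
        rw [sum_comm]
        refine sum_congr rfl fun r hr => ?_
        rw [← sum_smul, sum_count_eq_sum_range (mem_Icc.mp hr).1,
          sum_range_div_eq_sum_filter_dvd (fun k => partitionCount (n - k)) (mem_Icc.mp hr).1,
          sum_smul]
    _ = _ := by
        rw [sum_comm' (t' := Icc 1 n) (s' := Nat.divisors) fun r k => ?_]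
        · simp_rw [smul_sum]
        simp only [mem_Icc, mem_filter, Nat.mem_divisors]
        constructor
        · rintro ⟨-, ⟨hk, hkn⟩, hrk⟩
          exact ⟨⟨hrk, by omega⟩, hk, hkn⟩
        · rintro ⟨⟨hrk, -⟩, hk, hkn⟩
          exact ⟨⟨Nat.pos_of_dvd_of_pos hrk hk, (Nat.le_of_dvd hk hrk).trans hkn⟩, ⟨hk, hkn⟩, hrk⟩

end Nat.Partition

theorem stmt_4_general (m i n : ℕ) (hi1 : 1 ≤ i) (him : i ≤ m) :
    ∑ lam : Nat.Partition n, X m i lam =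
      ∑ k ∈ Finset.Icc 1 n, partitionCount (n - k) *
        ∑ d ∈ k.divisors, (d + m - i) / m := by
  let f : ℕ → ℕ := fun a => (a + m - i) / m
  calc ∑ lam : Nat.Partition n, X m i lam
      = ∑ lam : Nat.Partition n, (lam.conjugate.parts.map f).sum := by
        refine sum_congr rfl fun lam _ => ?_
        simp only [X, Nat.Partition.sum_sortedParts_ite_eq_sum_conjugate, f,
          card_filter_range_add_one_mod_eq_div hi1 him]
    _ = ∑ lam : Nat.Partition n, (lam.parts.map f).sum :=
        Nat.Partition.conjugate_involutive.bijective.sum_comp fun lam => (lam.parts.map f).sum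
    _ = _ := Nat.Partition.sum_sum_map_parts f n

theorem stmt_4 (m i n : ℕ) (hm : 1 ≤ m) (hi1 : 1 ≤ i) (him : i ≤ m) (hn : 1 ≤ n) :
    ∑ lam : Nat.Partition n, X m i lam =
      ∑ k ∈ Finset.Icc 1 n, partitionCount (n - k) *
        ∑ d ∈ k.divisors, (d + m - i) / m :=
  stmt_4_general m i n hi1 him
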